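/- Failure of the consistency conditions for the pooled-outcome metric: let d₀(x,y) = (|x| − |y|)² on [−1,1], m(x) = x/2, and ρ(x) = x/(4−x) for x ≥ 0, ρ(x) = −3x/(4−x) for x < 0. Then there is no constant C > 0 with d₀(x,y) ≥ C·|m(x) − m(y)| for all x, y ∈ [−1,1], and there is no constant C > 0 with d₀(x,y) ≥ C·|ρ(x) − ρ(y)| for all x, y ∈ [−1,1]; indeed for every x ∈ (0,1], d₀(x, −x) = 0 while |m(x) − m(−x)| = x > 0 and |ρ(x) − ρ(−x)| = |x/(4−x) − 3x/(4+x)| > 0. -/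

import Mathlib

/-!
`d₀` only sees `|x|`, so it vanishes on every pair `x, -x`, while `m` and `ρ` both separate
`x` from `-x`; a lower bound `C·|f x − f y| ≤ d₀(x,y)` with `C > 0` is therefore impossible.
For `ρ` the gap is `ρ(x) − ρ(−x) = 4x(x − 2)/(16 − x²)`, nonzero on `(0, 2)`.
-/

/-- The pooled-outcome pseudometric of the Section 2 counterexample:
`d₀(x,y) = (|x| − |y|)²`. -/
noncomputable def pooledMetric (x y : ℝ) : ℝ := (|x| - |y|) ^ 2

/-- The control conditional mean of the Section 2 counterexample: `m(x) = x/2`. -/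
noncomputable def ctrlMean (x : ℝ) : ℝ := x / 2

/-- The propensity score of the Section 2 counterexample:
`ρ(x) = x/(4−x)` for `x ≥ 0` and `ρ(x) = −3x/(4−x)` for `x < 0`. -/
noncomputable def propScore (x : ℝ) : ℝ :=
  if 0 ≤ x then x / (4 - x) else (-3 * x) / (4 - x)

theorem not_exists_pos_mul_abs_sub_le_of_eq_zero {α : Type*} {d : α → α → ℝ} {f : α → ℝ}
    {s : Set α} {x y : α} (hx : x ∈ s) (hy : y ∈ s) (hd : d x y = 0) (hf : f x ≠ f y) :
    ¬ ∃ C : ℝ, 0 < C ∧ ∀ x ∈ s, ∀ y ∈ s, C * |f x - f y| ≤ d x y := by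
  rintro ⟨C, hC, hbound⟩
  have hgap : 0 < C * |f x - f y| := mul_pos hC (abs_pos.2 (sub_ne_zero.2 hf))
  linarith [hbound x hx y hy]

theorem pooledMetric_neg_right (x : ℝ) : pooledMetric x (-x) = 0 := by
  simp [pooledMetric]

theorem ctrlMean_sub_ctrlMean_neg (x : ℝ) : ctrlMean x - ctrlMean (-x) = x := by
  unfold ctrlMean
  ring

theorem propScore_sub_propScore_neg {x : ℝ} (hx : 0 < x) :
    propScore x - propScore (-x) = x / (4 - x) - 3 * x / (4 + x) := by
  rw [propScore, propScore, if_pos hx.le, if_neg (by linarith)]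
  ring

theorem propScore_sub_propScore_neg_neg {x : ℝ} (hx₀ : 0 < x) (hx₂ : x < 2) :
    propScore x - propScore (-x) < 0 := by
  have h4m : 0 < 4 - x := by linarith
  have h4p : 0 < 4 + x := by linarith
  have hclosed : x / (4 - x) - 3 * x / (4 + x) = 4 * x * (x - 2) / ((4 - x) * (4 + x)) := by
    field_simp
    ring
  rw [propScore_sub_propScore_neg hx₀, hclosed]
  exact div_neg_of_neg_of_pos (by nlinarith) (by positivity)

/-- **Failure of the consistency conditions for the pooled-outcome metric.** There is no
`C > 0` with `d₀(x,y) ≥ C·|m(x) − m(y)|` on `[−1,1]` (PGM_C), and no `C > 0` with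
`d₀(x,y) ≥ C·|ρ(x) − ρ(y)|` on `[−1,1]` (PSM); indeed for every `x ∈ (0,1]`,
`d₀(x,−x) = 0` while `|m(x) − m(−x)| = x > 0` and
`|ρ(x) − ρ(−x)| = |x/(4−x) − 3x/(4+x)| > 0`. -/
theorem pooled_metric_fails_consistency_conditions :
    (¬ ∃ C : ℝ, 0 < C ∧ ∀ x ∈ Set.Icc (-1 : ℝ) 1, ∀ y ∈ Set.Icc (-1 : ℝ) 1,
      C * |ctrlMean x - ctrlMean y| ≤ pooledMetric x y) ∧
    (¬ ∃ C : ℝ, 0 < C ∧ ∀ x ∈ Set.Icc (-1 : ℝ) 1, ∀ y ∈ Set.Icc (-1 : ℝ) 1,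
      C * |propScore x - propScore y| ≤ pooledMetric x y) ∧
    ∀ x ∈ Set.Ioc (0 : ℝ) 1,
      pooledMetric x (-x) = 0 ∧
      |ctrlMean x - ctrlMean (-x)| = x ∧ 0 < x ∧
      |propScore x - propScore (-x)| = |x / (4 - x) - 3 * x / (4 + x)| ∧
      0 < |propScore x - propScore (-x)| := by
  have hone : (1 : ℝ) ∈ Set.Icc (-1) 1 := by norm_num
  have hneg_one : (-1 : ℝ) ∈ Set.Icc (-1) 1 := by norm_num
  have hpropScore_gap (x : ℝ) (hx : x ∈ Set.Ioc (0 : ℝ) 1) : propScore x - propScore (-x) ≠ 0 :=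
    (propScore_sub_propScore_neg_neg hx.1 (by linarith [hx.2])).ne
  refine ⟨?_, ?_, fun x hx => ⟨pooledMetric_neg_right x, ?_, hx.1, ?_, ?_⟩⟩
  · refine not_exists_pos_mul_abs_sub_le_of_eq_zero hone hneg_one (pooledMetric_neg_right 1) ?_
    rw [← sub_ne_zero, ctrlMean_sub_ctrlMean_neg]
    exact one_ne_zero
  · exact not_exists_pos_mul_abs_sub_le_of_eq_zero hone hneg_one (pooledMetric_neg_right 1)
      (sub_ne_zero.1 (hpropScore_gap 1 (by norm_num)))
  · rw [ctrlMean_sub_ctrlMean_neg, abs_of_pos hx.1]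
  · rw [propScore_sub_propScore_neg hx.1]
  · exact abs_pos.2 (hpropScore_gap x hx)
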